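/- arXiv:1910.08932 — 2 statements merged into one kernel-verified Lean document; each statement's English description precedes it below -/
import Mathlib

section
/- If pq is even and gcd(r,q) = 1, then U(pr², q) = U(p, q), where U(p,q) = (1/q)·Σ_{x∈Z/qZ} exp(2πi p x²/(2q)) computed as (1/(2q))·Σ_{x=0}^{2q-1} exp(πi p x²/q). -/
/-!
For `pq` even the summand `x ↦ exp(πi·p·x²/q)` is `q`-periodic on `ℤ`, since shifting `x` by `q`
changes the exponent by `πi·p·(2x + q) ∈ 2πiℤ`. Hence the sum over `[0, 2q)` is twice the sum over
a single period, i.e. over `ℤ/qℤ`. Since `x ↦ r·x` permutes `ℤ/qℤ` when `gcd(r,q) = 1`, replacing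
`p` by `p·r²`, which turns the summand at `x` into the summand at `r·x`, does not change that sum.
-/

open Finset

/-- `U(p,q) = (1/(2q))·Σ_{x=0}^{2q-1} exp(πi·p·x²/q)`. -/
noncomputable def U (p q : ℤ) : ℂ :=
  (1 / (2 * (q : ℂ))) * ∑ x ∈ Finset.range (2 * q).toNat,
    Complex.exp (Real.pi * Complex.I * p * (x : ℂ) ^ 2 / q)

open Function

section PeriodicSum

variable {M : Type*} {f : ℤ → M} {n : ℕ}

theorem Function.Periodic.eq_of_intCast_eq (hf : Periodic f n) {x y : ℤ}
    (h : (x : ZMod n) = y) : f x = f y := by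
  obtain ⟨k, hk⟩ := (ZMod.intCast_eq_intCast_iff_dvd_sub x y n).mp h
  rw [eq_add_of_sub_eq' hk, mul_comm (n : ℤ) k]
  exact ((hf.int_mul k) x).symm

variable [AddCommMonoid M]

theorem Finset.sum_range_eq_sum_zmod [NeZero n] (g : ℕ → M) :
    ∑ x ∈ range n, g x = ∑ z : ZMod n, g z.val := by
  obtain _ | n := n
  · exact absurd rfl (NeZero.ne 0)
  · exact Finset.sum_range g

theorem Function.Periodic.sum_range_comp_mul_left (hf : Periodic f n) {r : ℤ}
    (hr : IsCoprime r n) : ∑ x ∈ range n, f (r * x) = ∑ x ∈ range n, f x := by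
  obtain _ | n := n
  · simp
  have hval (z : ZMod (n + 1)) : f (r * z.val) = f (r * z : ZMod (n + 1)).val :=
    hf.eq_of_intCast_eq (by simp)
  simp only [sum_range_eq_sum_zmod fun x : ℕ ↦ f (r * x), sum_range_eq_sum_zmod fun x : ℕ ↦ f x,
    hval]
  exact Fintype.sum_equiv (Units.mulLeft (ZMod.unitOfIsCoprime r hr)) _ _ fun _ ↦ rfl

theorem Function.Periodic.sum_range_mul (hf : Periodic f n) (m : ℕ) :
    ∑ x ∈ range (m * n), f x = m • ∑ x ∈ range n, f x := by
  induction m with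
  | zero => simp
  | succ m ih =>
    rw [add_mul, one_mul, sum_range_add, ih, succ_nsmul]
    congr 1
    refine sum_congr rfl fun x _ ↦ ?_
    simpa [add_comm] using (hf.nat_mul m) x

end PeriodicSum

open Complex in
noncomputable def quadExp (p q x : ℤ) : ℂ :=
  exp (Real.pi * I * p * x ^ 2 / q)

theorem quadExp_periodic {p q : ℤ} (hpq : Even (p * q)) : Periodic (quadExp p q) q := by
  obtain rfl | hq := eq_or_ne q 0
  · simp
  obtain ⟨c, hc⟩ := hpq
  intro x
  unfold quadExp
  rw [← mul_one (Complex.exp (Real.pi * Complex.I * p * (x : ℂ) ^ 2 / q)),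
    ← Complex.exp_int_mul_two_pi_mul_I (p * x + c), ← Complex.exp_add]
  have hc' : (p : ℂ) * q = c + c := by exact_mod_cast hc
  congr 1
  field_simp
  push_cast
  linear_combination (q : ℂ) * hc'

theorem quadExp_mul_sq (p q r x : ℤ) : quadExp (p * r ^ 2) q x = quadExp p q (r * x) := by
  unfold quadExp
  push_cast
  ring_nf

theorem U_natCast (p : ℤ) (n : ℕ) :
    U p n = (1 / (2 * n : ℂ)) * ∑ x ∈ range (2 * n), quadExp p n x := by
  have h2n : (2 * (n : ℤ)).toNat = 2 * n := by omega
  simp [U, quadExp, h2n]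

/-- If `pq` is even and `gcd(r,q) = 1`, then `U(pr², q) = U(p, q)`. -/
theorem U_mul_sq (p q r : ℤ) (hq : 0 < q) (hpq : Even (p * q)) (hrq : Int.gcd r q = 1) :
    U (p * r ^ 2) q = U p q := by
  lift q to ℕ using hq.le
  have hpr : Even (p * r ^ 2 * q) := by rw [mul_right_comm]; exact hpq.mul_right _
  have hr : IsCoprime r q := Int.isCoprime_iff_gcd_eq_one.mpr hrq
  rw [U_natCast, U_natCast, (quadExp_periodic hpr).sum_range_mul,
    (quadExp_periodic hpq).sum_range_mul]
  simp only [quadExp_mul_sq]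
  rw [(quadExp_periodic hpq).sum_range_comp_mul_left hr]
end

section
/- Limit of det(-iτ)^{1/2} at a real symmetric boundary point: for nonsingular symmetric real n×n matrix t, lim_{ε→0⁺} det(-i(t + εi·I_n))^{1/2} = |det t|^{1/2}·e^{-iπσ_t/4}, where σ_t is the signature of t and det(-iτ)^{1/2} is the branch on the Siegel upper half-space positive for purely imaginary τ. -/
/-!
Fix `ε > 0` and follow the line `s ↦ s t + iε I` in the Siegel upper half-space. Diagonalising
`t` orthogonally, `det(-i(s t + iε I)) = ∏ⱼ (ε - i s λⱼ)`, and every factor has real part `ε > 0`,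
so `s ↦ ∏ⱼ (ε - i s λⱼ)^{1/2}` (principal branches) is a continuous, nowhere vanishing square root
of `det(-iτ)` along the line. So is `g`; at `s = 0` both are positive reals, so by connectedness
they agree at `s = 1`. Letting `ε → 0⁺` gives `∏ⱼ (-iλⱼ)^{1/2} = ∏ⱼ |λⱼ|^{1/2} e^{-iπ sgn(λⱼ)/4}`.
-/

open Matrix Finset Complex
open scoped Real

namespace Complex

theorem ofReal_mul_cpow_inv_two {r : ℝ} (hr : 0 < r) {x : ℂ} (hx : x ≠ 0) :
    (r * x) ^ (2⁻¹ : ℂ) = √r * x ^ (2⁻¹ : ℂ) := by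
  have hsqrt : (√r : ℂ) = (r : ℂ) ^ (2⁻¹ : ℂ) := by
    rw [Real.sqrt_eq_rpow, ofReal_cpow hr.le]
    norm_num
  rw [hsqrt, cpow_def_of_ne_zero (mul_ne_zero (ofReal_ne_zero.2 hr.ne') hx),
    cpow_def_of_ne_zero (ofReal_ne_zero.2 hr.ne'), cpow_def_of_ne_zero hx, log_ofReal_mul hr hx,
    ofReal_log hr.le, add_mul, exp_add]

theorem ofReal_cpow_inv_two {r : ℝ} (hr : 0 < r) : (r : ℂ) ^ (2⁻¹ : ℂ) = √r := by
  simpa using ofReal_mul_cpow_inv_two hr one_ne_zero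

theorem neg_I_mul_ofReal_cpow_inv_two {l : ℝ} (hl : l ≠ 0) :
    (-I * l) ^ (2⁻¹ : ℂ) = √|l| * exp (-(π * I * SignType.sign l) / 4) := by
  rcases hl.lt_or_gt with hneg | hpos
  · rw [show -I * l = ((-l : ℝ) : ℂ) * I by push_cast; ring,
      ofReal_mul_cpow_inv_two (neg_pos.2 hneg) I_ne_zero, abs_of_neg hneg, sign_neg hneg,
      cpow_def_of_ne_zero I_ne_zero, log_I]
    congr 2
    push_cast [SignType.coe_one]
    ring
  · rw [show -I * l = (l : ℂ) * -I by ring,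
      ofReal_mul_cpow_inv_two hpos (neg_ne_zero.2 I_ne_zero), abs_of_pos hpos, sign_pos hpos,
      cpow_def_of_ne_zero (neg_ne_zero.2 I_ne_zero), log_neg_I]
    congr 2
    push_cast [SignType.coe_one]
    ring

end Complex

theorem Finset.sum_sign_eq_card_pos_sub_card_neg {κ α R : Type*} [AddCommGroupWithOne R]
    [Zero α] [LinearOrder α] (s : Finset κ) (f : κ → α) :
    ∑ i ∈ s, (SignType.sign (f i) : R) = #{i ∈ s | 0 < f i} - #{i ∈ s | f i < 0} := by
  rw [card_filter, card_filter]
  push_cast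
  rw [← sum_sub_distrib]
  refine sum_congr rfl fun i _ => ?_
  rcases lt_trichotomy (f i) 0 with hneg | hzero | hpos
  · simp [hneg, hneg.not_gt]
  · simp [hzero]
  · simp [hpos, hpos.not_gt]

theorem tendsto_prod_neg_I_mul_add_cpow_inv_two {κ : Type*} (s : Finset κ) {l : κ → ℝ}
    (hl : ∀ i ∈ s, l i ≠ 0) :
    Filter.Tendsto (fun ε : ℝ => ∏ i ∈ s, (-I * l i + ε) ^ (2⁻¹ : ℂ)) (nhdsWithin 0 (Set.Ioi 0))
      (nhds (∏ i ∈ s, (-I * l i) ^ (2⁻¹ : ℂ))) := by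
  refine tendsto_finsetProd _ fun i hi => ?_
  have hslit : -I * l i ∈ slitPlane := mem_slitPlane_iff.2 (Or.inr (by simpa using hl i hi))
  have hbase : Filter.Tendsto (fun ε : ℝ => -I * l i + ε) (nhds 0) (nhds (-I * l i)) :=
    (continuous_const.add continuous_ofReal).tendsto' 0 _ (by simp)
  exact ((continuousAt_cpow_const hslit).tendsto.comp hbase).mono_left nhdsWithin_le_nhds

variable {ι : Type*} [Fintype ι]

def siegelUpperHalfSpace (ι : Type*) [Fintype ι] : Set (Matrix ι ι ℂ) :=
  {τ | τ.IsSymm ∧ (τ.map Complex.im).PosDef}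

theorem map_ofReal_add_I_smul_mem_siegelUpperHalfSpace {x y : Matrix ι ι ℝ} (hx : x.IsSymm)
    (hy : y.PosDef) : x.map ofReal + I • y.map ofReal ∈ siegelUpperHalfSpace ι := by
  refine ⟨?_, ?_⟩
  · rw [IsSymm, transpose_add, transpose_smul, ← transpose_map, ← transpose_map, hx,
      isHermitian_iff_isSymm.mp hy.isHermitian]
  · convert hy
    ext i j
    simp

theorem Matrix.IsHermitian.det_smul_map_ofReal_add_smul_one [DecidableEq ι] {t : Matrix ι ι ℝ}
    (ht : t.IsHermitian) (a b : ℂ) :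
    det (a • t.map ofReal + b • 1) = ∏ i, (a * ht.eigenvalues i + b) := by
  set U : Matrix ι ι ℝ := ↑ht.eigenvectorUnitary
  have hspec : t = U * diagonal ht.eigenvalues * star U := by
    simpa using ht.spectral_theorem
  have hUU : U * star U = 1 := Unitary.coe_mul_star_self _
  have hUU' : star U * U = 1 := Unitary.coe_star_mul_self _
  let φ := (ofRealHom : ℝ →+* ℂ).mapMatrix (m := ι)
  have hdiag : diagonal (fun i => a * ht.eigenvalues i + b) =
      a • φ (diagonal ht.eigenvalues) + b • 1 := by
    ext i j
    by_cases hij : i = j <;> simp [hij, φ]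
  have hconj : a • t.map ofReal + b • 1 =
      φ U * diagonal (fun i => a * ht.eigenvalues i + b) * φ (star U) := by
    rw [hdiag, mul_add, add_mul, Matrix.mul_smul, Matrix.smul_mul, Matrix.mul_smul,
      Matrix.smul_mul, mul_one, ← map_mul, ← map_mul, ← map_mul, ← hspec, hUU, map_one]
    rfl
  rw [hconj, det_conj_of_mul_eq_one (by rw [← map_mul, hUU, map_one])
    (by rw [← map_mul, hUU', map_one]), det_diagonal]

theorem Matrix.IsHermitian.eigenvalues_ne_zero_of_det_ne_zero [DecidableEq ι]
    {t : Matrix ι ι ℝ} (ht : t.IsHermitian) (hdet : t.det ≠ 0) (i : ι) :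
    ht.eigenvalues i ≠ 0 := fun hi =>
  hdet (by simpa using ht.det_eq_prod_eigenvalues ▸ prod_eq_zero (mem_univ i) hi)

theorem Matrix.IsHermitian.prod_neg_I_mul_eigenvalues_cpow_inv_two [DecidableEq ι]
    {t : Matrix ι ι ℝ} (ht : t.IsHermitian) (hdet : t.det ≠ 0) :
    ∏ i, (-I * ht.eigenvalues i) ^ (2⁻¹ : ℂ) = ((√|t.det| : ℝ) : ℂ) * Complex.exp (-π * I *
      (((#{i | 0 < ht.eigenvalues i} : ℕ) : ℤ) - ((#{i | ht.eigenvalues i < 0} : ℕ) : ℤ)) / 4) := by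
  have hdet_eq : t.det = ∏ i, ht.eigenvalues i := by simpa using ht.det_eq_prod_eigenvalues
  rw [prod_congr rfl fun i _ =>
      neg_I_mul_ofReal_cpow_inv_two (ht.eigenvalues_ne_zero_of_det_ne_zero hdet i),
    prod_mul_distrib, ← exp_sum, ← ofReal_prod, ← Real.sqrt_prod _ fun i _ => abs_nonneg _,
    ← abs_prod, ← hdet_eq, ← sum_div, sum_neg_distrib, ← mul_sum,
    sum_sign_eq_card_pos_sub_card_neg]
  push_cast
  rw [neg_mul, neg_mul]

theorem Matrix.IsHermitian.det_neg_I_smul_map_ofReal_add_I_smul [DecidableEq ι]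
    {t : Matrix ι ι ℝ} (ht : t.IsHermitian) (s ε : ℝ) :
    det ((-I) • ((s • t).map ofReal + I • (ε • 1 : Matrix ι ι ℝ).map ofReal)) =
      ∏ i, (-I * s * ht.eigenvalues i + ε) := by
  rw [← ht.det_smul_map_ofReal_add_smul_one]
  congr 1
  ext i j
  simp only [Matrix.smul_apply, Matrix.add_apply, map_apply, smul_eq_mul, ofReal_mul, one_apply,
    apply_ite, mul_one, mul_zero, ofReal_zero, add_zero, neg_mul, neg_smul, Complex.coe_smul,
    Matrix.neg_apply, real_smul, smul_zero]
  split_ifs <;> [linear_combination -(ε : ℂ) * I_sq; ring]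

structure IsSqrtDetBranch [DecidableEq ι] (g : Matrix ι ι ℂ → ℂ) : Prop where
  sq_eq : ∀ τ ∈ siegelUpperHalfSpace ι, g τ ^ 2 = det ((-I) • τ)
  continuousOn : ContinuousOn g (siegelUpperHalfSpace ι)
  exists_pos : ∀ v : Matrix ι ι ℝ, v.PosDef → ∃ c : ℝ, 0 < c ∧ g (I • v.map ofReal) = c

theorem IsSqrtDetBranch.apply_map_ofReal_add_I_smul [DecidableEq ι] {g : Matrix ι ι ℂ → ℂ}
    (hg : IsSqrtDetBranch g) {t : Matrix ι ι ℝ} (ht : t.IsHermitian) {ε : ℝ} (hε : 0 < ε) :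
    g (t.map ofReal + I • (ε • 1 : Matrix ι ι ℝ).map ofReal) =
      ∏ i, (-I * ht.eigenvalues i + ε) ^ (2⁻¹ : ℂ) := by
  set τ : ℝ → Matrix ι ι ℂ := fun s => (s • t).map ofReal + I • (ε • 1 : Matrix ι ι ℝ).map ofReal
  set root : ℝ → ℂ := fun s => ∏ i, (-I * s * ht.eigenvalues i + ε) ^ (2⁻¹ : ℂ)
  have hbase : ∀ (s : ℝ) i, -I * s * ht.eigenvalues i + ε ∈ slitPlane := fun s i =>
    mem_slitPlane_iff.2 (Or.inl (by simpa using hε))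
  have hτ_mem : ∀ s, τ s ∈ siegelUpperHalfSpace ι := fun s =>
    map_ofReal_add_I_smul_mem_siegelUpperHalfSpace ((isHermitian_iff_isSymm.mp ht).smul s)
      (PosDef.one.smul hε)
  have hsq : Set.EqOn ((g ∘ τ) ^ 2) (root ^ 2) Set.univ := fun s _ => by
    simp only [Pi.pow_apply, Function.comp_apply, hg.sq_eq _ (hτ_mem s), τ, root,
      ht.det_neg_I_smul_map_ofReal_add_I_smul, ← prod_pow, cpow_ofNat_inv_pow]
  have hτ_cont : Continuous τ := by fun_prop
  have hroot_cont : Continuous root := continuous_finsetProd _ fun i _ =>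
    continuous_iff_continuousAt.2 fun s =>
      (continuousAt_cpow_const (hbase s i)).comp (f := fun s : ℝ => -I * s * ht.eigenvalues i + ε)
        (by fun_prop)
  have hroot_ne : ∀ s, root s ≠ 0 := fun s =>
    prod_ne_zero_iff.2 fun i _ => by simpa using slitPlane_ne_zero (hbase s i)
  have h_zero : g (τ 0) = root 0 := by
    obtain ⟨c, hc, hgc⟩ := hg.exists_pos _ (PosDef.one.smul hε)
    have hroot0 : root 0 = ((√ε ^ Fintype.card ι : ℝ) : ℂ) := by simp [root, ofReal_cpow_inv_two hε]
    have hgτ0 : g (τ 0) = c := by simpa [τ] using hgc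
    have hsq0 := hsq (Set.mem_univ 0)
    simp only [Pi.pow_apply, Function.comp_apply, hgτ0, hroot0] at hsq0
    rw [hgτ0, hroot0, ofReal_inj, ← pow_left_inj₀ hc.le (by positivity) two_ne_zero]
    exact_mod_cast hsq0
  simpa [τ, root] using isPreconnected_univ.eq_of_sq_eq (hg.continuousOn.comp_continuous hτ_cont
    hτ_mem).continuousOn hroot_cont.continuousOn hsq (fun _ => hroot_ne _) (Set.mem_univ 0) h_zero
    (Set.mem_univ 1)

/-- Limit of the branch `det(-iτ)^{1/2}` at a real symmetric boundary point.
Here `g` is the unique continuous branch of `τ ↦ det(-iτ)^{1/2}` on the Siegel upper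
half-space (symmetric complex matrices with positive definite imaginary part),
characterized by `g(τ)² = det(-iτ)` and positivity for purely imaginary `τ`.
For a nonsingular real symmetric `t` with signature `σ_t`,
`lim_{ε→0⁺} g(t + εi·I) = |det t|^{1/2}·e^{-iπσ_t/4}`. -/
theorem det_branch_boundary_limit (n : ℕ) (t : Matrix (Fin n) (Fin n) ℝ)
    (ht : t.IsHermitian) (hdet : t.det ≠ 0)
    (g : Matrix (Fin n) (Fin n) ℂ → ℂ)
    (hsq : ∀ τ : Matrix (Fin n) (Fin n) ℂ, τ.IsSymm → (τ.map Complex.im).PosDef →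
      g τ ^ 2 = Matrix.det ((-Complex.I) • τ))
    (hcont : ContinuousOn g {τ : Matrix (Fin n) (Fin n) ℂ |
      τ.IsSymm ∧ (τ.map Complex.im).PosDef})
    (hpos : ∀ v : Matrix (Fin n) (Fin n) ℝ, v.PosDef →
      ∃ c : ℝ, 0 < c ∧ g (Complex.I • v.map (fun x : ℝ => (x : ℂ))) = (c : ℂ)) :
    Filter.Tendsto
      (fun ε : ℝ => g (t.map (fun x : ℝ => (x : ℂ)) + (ε * Complex.I) • (1 : Matrix (Fin n) (Fin n) ℂ)))
      (nhdsWithin 0 (Set.Ioi 0))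
      (nhds ((Real.sqrt |t.det| : ℂ) * Complex.exp (-Real.pi * Complex.I *
        (((univ.filter fun i => 0 < ht.eigenvalues i).card : ℤ) -
         ((univ.filter fun i => ht.eigenvalues i < 0).card : ℤ)) / 4))) := by
  have hg : IsSqrtDetBranch g := ⟨fun τ hτ => hsq τ hτ.1 hτ.2, hcont, hpos⟩
  rw [← ht.prod_neg_I_mul_eigenvalues_cpow_inv_two hdet]
  refine (tendsto_prod_neg_I_mul_add_cpow_inv_two univ fun i _ =>
    ht.eigenvalues_ne_zero_of_det_ne_zero hdet i).congr' ?_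
  filter_upwards [self_mem_nhdsWithin] with ε hε
  rw [← hg.apply_map_ofReal_add_I_smul ht hε]
  congr 2
  ext i j
  by_cases hij : i = j <;> simp [hij, mul_comm]
end
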